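/- arXiv:2410.03230 — 4 statements merged into one kernel-verified Lean document; each statement's English description precedes it below -/
import Mathlib

section
/- Let ρ_0, ..., ρ_U be nonnegative reals satisfying the nested constraints ∑_{r=0}^{j} ρ_r ≤ 2j + 1 for every j = 0, ..., U. Then ∑_{r=0}^{U} ρ_r/√(r+1) ≤ 1 + 2·∑_{r=1}^{U} 1/√(r+1), and the maximum is attained by ρ_0 = 1 and ρ_r = 2 for r ≥ 1. -/
open Finset

section AbelSummation

variable {R : Type*} [CommRing R] [LinearOrder R] [IsStrictOrderedRing R]

/-- Summation by parts writes the sum as `w n * C n + ∑ (w i - w (i+1)) * C i` over the partial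
sums `C i` of `c`, a combination with nonnegative coefficients. -/
theorem sum_range_succ_mul_nonneg_of_antitone {w c : ℕ → R} {n : ℕ} (hw : Antitone w)
    (hwn : 0 ≤ w n) (hc : ∀ j ≤ n, 0 ≤ ∑ r ∈ range (j + 1), c r) :
    0 ≤ ∑ r ∈ range (n + 1), w r * c r := by
  have hparts := sum_range_by_parts w c (n + 1)
  simp only [smul_eq_mul, Nat.add_sub_cancel] at hparts
  rw [hparts, sub_eq_add_neg, ← sum_neg_distrib]
  refine add_nonneg (mul_nonneg hwn (hc n le_rfl)) (sum_nonneg fun i hi => ?_)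
  rw [← neg_mul, neg_sub]
  exact mul_nonneg (sub_nonneg.mpr (hw i.le_succ)) (hc i (mem_range.mp hi).le)

theorem sum_range_succ_mul_le_of_partialSums_le {w a b : ℕ → R} {n : ℕ} (hw : Antitone w)
    (hwn : 0 ≤ w n) (hab : ∀ j ≤ n, ∑ r ∈ range (j + 1), a r ≤ ∑ r ∈ range (j + 1), b r) :
    ∑ r ∈ range (n + 1), w r * a r ≤ ∑ r ∈ range (n + 1), w r * b r := by
  have h := sum_range_succ_mul_nonneg_of_antitone (c := b - a) hw hwn fun j hj => by
    simpa only [Pi.sub_apply, sum_sub_distrib, sub_nonneg] using hab j hj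
  simpa only [Pi.sub_apply, mul_sub, sum_sub_distrib, sub_nonneg] using h

end AbelSummation

theorem antitone_inv_sqrt_succ : Antitone fun r : ℕ => (Real.sqrt (r + 1))⁻¹ := by
  intro r s hrs
  apply inv_anti₀ (by positivity)
  gcongr

theorem sum_range_succ_one_two (j : ℕ) :
    ∑ r ∈ range (j + 1), (if r = 0 then (1 : ℝ) else 2) = 2 * j + 1 := by
  induction j with
  | zero => simp
  | succ n ih =>
    rw [sum_range_succ, ih, if_neg n.succ_ne_zero]
    push_cast
    ring

theorem sum_range_succ_one_two_div_sqrt (U : ℕ) :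
    ∑ r ∈ range (U + 1), (if r = 0 then (1 : ℝ) else 2) / Real.sqrt (r + 1) =
      1 + 2 * ∑ r ∈ Icc 1 U, 1 / Real.sqrt (r + 1) := by
  induction U with
  | zero => simp
  | succ n ih =>
    rw [sum_range_succ, ih, sum_Icc_succ_top (by omega), if_neg n.succ_ne_zero]
    ring

theorem lp_weighted_sum_bound_general
    (U : ℕ) (ρ : ℕ → ℝ)
    (hconstr : ∀ j ≤ U, ∑ r ∈ Finset.range (j + 1), ρ r ≤ 2 * (j : ℝ) + 1) :
    (∑ r ∈ Finset.range (U + 1), ρ r / Real.sqrt (r + 1) ≤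
      1 + 2 * ∑ r ∈ Finset.Icc 1 U, 1 / Real.sqrt (r + 1)) ∧
    (∑ r ∈ Finset.range (U + 1),
        (if r = 0 then (1 : ℝ) else 2) / Real.sqrt (r + 1) =
      1 + 2 * ∑ r ∈ Finset.Icc 1 U, 1 / Real.sqrt (r + 1)) := by
  refine ⟨?_, sum_range_succ_one_two_div_sqrt U⟩
  rw [← sum_range_succ_one_two_div_sqrt U]
  simp only [div_eq_inv_mul]
  refine sum_range_succ_mul_le_of_partialSums_le antitone_inv_sqrt_succ (by positivity)
    fun j hj => ?_
  rw [sum_range_succ_one_two]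
  exact hconstr j hj

theorem lp_weighted_sum_bound
    (U : ℕ) (ρ : ℕ → ℝ)
    (hρ : ∀ r ≤ U, 0 ≤ ρ r)
    (hconstr : ∀ j ≤ U, ∑ r ∈ Finset.range (j + 1), ρ r ≤ 2 * (j : ℝ) + 1) :
    (∑ r ∈ Finset.range (U + 1), ρ r / Real.sqrt (r + 1) ≤
      1 + 2 * ∑ r ∈ Finset.Icc 1 U, 1 / Real.sqrt (r + 1)) ∧
    (∑ r ∈ Finset.range (U + 1),
        (if r = 0 then (1 : ℝ) else 2) / Real.sqrt (r + 1) =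
      1 + 2 * ∑ r ∈ Finset.Icc 1 U, 1 / Real.sqrt (r + 1)) :=
  lp_weighted_sum_bound_general U ρ hconstr
end

section
/- Let p be a probability distribution on a finite set P, let w : P → ℝ be nonnegative, and let η > 0. Then the mixability gap satisfies ∑_{k∈P} p(k)w(k) + (1/η)·log(∑_{k∈P} p(k)·exp(-η·w(k))) ≤ (η/2)·∑_{k∈P} p(k)·w(k)². -/
open Finset

lemma Real.exp_neg_le_one_sub_add_sq_div_two {y : ℝ} (hy : 0 ≤ y) :
    Real.exp (-y) ≤ 1 - y + y ^ 2 / 2 := by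
  have hexp := Real.quadratic_le_exp_of_nonneg hy
  have hpos : 0 ≤ 1 - y + y ^ 2 / 2 := by nlinarith [sq_nonneg (y - 1)]
  -- `(1 - y + y²/2) (1 + y + y²/2) = 1 + y⁴/4`, so the quadratic bound on `exp y` inverts.
  rw [Real.exp_neg, inv_le_iff_one_le_mul₀ (Real.exp_pos y)]
  nlinarith [mul_le_mul_of_nonneg_right hexp hpos, sq_nonneg (y ^ 2)]

section ProbabilityVector

variable {ι : Type*} {s : Finset ι} {p x : ι → ℝ}

lemma sum_mul_exp_neg_pos (hp : ∀ k ∈ s, 0 ≤ p k) (hpsum : ∑ k ∈ s, p k = 1) :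
    0 < ∑ k ∈ s, p k * Real.exp (-x k) := by
  obtain ⟨k, hks, hk⟩ : ∃ k ∈ s, 0 < p k := by
    by_contra! h
    have : ∑ k ∈ s, p k ≤ 0 := sum_nonpos h
    linarith
  exact sum_pos' (fun i hi => mul_nonneg (hp i hi) (Real.exp_pos _).le)
    ⟨k, hks, mul_pos hk (Real.exp_pos _)⟩

lemma sum_mul_exp_neg_le (hp : ∀ k ∈ s, 0 ≤ p k) (hpsum : ∑ k ∈ s, p k = 1)
    (hx : ∀ k ∈ s, 0 ≤ x k) :
    ∑ k ∈ s, p k * Real.exp (-x k) ≤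
      1 - ∑ k ∈ s, p k * x k + (∑ k ∈ s, p k * x k ^ 2) / 2 := by
  calc ∑ k ∈ s, p k * Real.exp (-x k)
      ≤ ∑ k ∈ s, p k * (1 - x k + x k ^ 2 / 2) :=
        sum_le_sum fun k hk => mul_le_mul_of_nonneg_left
          (Real.exp_neg_le_one_sub_add_sq_div_two (hx k hk)) (hp k hk)
    _ = ∑ k ∈ s, p k - ∑ k ∈ s, p k * x k + (∑ k ∈ s, p k * x k ^ 2) / 2 := by
        rw [sum_div, ← sum_sub_distrib, ← sum_add_distrib]
        exact sum_congr rfl fun k _ => by ring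
    _ = _ := by rw [hpsum]

lemma log_sum_mul_exp_neg_le (hp : ∀ k ∈ s, 0 ≤ p k) (hpsum : ∑ k ∈ s, p k = 1)
    (hx : ∀ k ∈ s, 0 ≤ x k) :
    Real.log (∑ k ∈ s, p k * Real.exp (-x k)) ≤
      -∑ k ∈ s, p k * x k + (∑ k ∈ s, p k * x k ^ 2) / 2 := by
  have hlog := Real.log_le_sub_one_of_pos (sum_mul_exp_neg_pos (x := x) hp hpsum)
  linarith [sum_mul_exp_neg_le hp hpsum hx]

end ProbabilityVector

theorem mixability_gap_bound_general
    {ι : Type*} [Fintype ι]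
    (p : ι → ℝ) (hp : ∀ k, 0 ≤ p k) (hpsum : ∑ k, p k = 1)
    (w : ι → ℝ) (hw : ∀ k, 0 ≤ w k)
    (η : ℝ) (hη : 0 < η) :
    ∑ k, p k * w k + (1 / η) * Real.log (∑ k, p k * Real.exp (-η * w k)) ≤
      (η / 2) * ∑ k, p k * (w k) ^ 2 := by
  have hlog := log_sum_mul_exp_neg_le (s := univ) (x := fun k => η * w k)
    (fun k _ => hp k) hpsum (fun k _ => mul_nonneg hη.le (hw k))
  have hfirst : ∑ k, p k * (η * w k) = η * ∑ k, p k * w k := by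
    rw [mul_sum]; exact sum_congr rfl fun k _ => by ring
  have hsecond : ∑ k, p k * (η * w k) ^ 2 = η ^ 2 * ∑ k, p k * w k ^ 2 := by
    rw [mul_sum]; exact sum_congr rfl fun k _ => by ring
  simp only [← neg_mul, hfirst, hsecond] at hlog
  rw [one_div_mul_eq_div]
  have : Real.log (∑ k, p k * Real.exp (-η * w k)) / η ≤
      (η / 2) * ∑ k, p k * w k ^ 2 - ∑ k, p k * w k :=
    (div_le_iff₀ hη).2 (by linarith)
  linarith

theorem mixability_gap_bound
    {ι : Type*} [Fintype ι] [Nonempty ι]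
    (p : ι → ℝ) (hp : ∀ k, 0 ≤ p k) (hpsum : ∑ k, p k = 1)
    (w : ι → ℝ) (hw : ∀ k, 0 ≤ w k)
    (η : ℝ) (hη : 0 < η) :
    ∑ k, p k * w k + (1 / η) * Real.log (∑ k, p k * Real.exp (-η * w k)) ≤
      (η / 2) * ∑ k, p k * (w k) ^ 2 :=
  mixability_gap_bound_general p hp hpsum w hw η hη
end

section
/- Let p be a probability distribution on a finite set P, w : P → ℝ nonnegative, and 0 < η' ≤ η. Then ∑_{k∈P} p(k)w(k) + (1/η)·log(∑_{k∈P} p(k)·exp(-η'·w(k))) ≤ (η/2)·∑_{k∈P} p(k)·w(k)² + 1/(2η). -/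
open Finset

theorem mixability_gap_bound_adaptive
    {ι : Type*} [Fintype ι] [Nonempty ι]
    (p : ι → ℝ) (hp : ∀ k, 0 ≤ p k) (hpsum : ∑ k, p k = 1)
    (w : ι → ℝ) (hw : ∀ k, 0 ≤ w k)
    (η η' : ℝ) (hη' : 0 < η') (hηη : η' ≤ η) :
    ∑ k, p k * w k + (1 / η) * Real.log (∑ k, p k * Real.exp (-η' * w k)) ≤
      (η / 2) * ∑ k, p k * (w k) ^ 2 + 1 / (2 * η) := by
  have hη : 0 < η := lt_of_lt_of_le hη' hηη
  -- the sum inside the log is in (0,1]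
  have hpos : 0 < ∑ k, p k * Real.exp (-η' * w k) := by
    have : ∑ k, p k * Real.exp (-η' * w k) ≥ ∑ k, p k * 0 := by
      apply Finset.sum_le_sum
      intro k _
      exact mul_le_mul_of_nonneg_left (le_of_lt (Real.exp_pos _)) (hp k)
    by_contra h
    push_neg at h
    have hz : ∀ k ∈ Finset.univ, p k * Real.exp (-η' * w k) = 0 := by
      have hle : ∀ k ∈ Finset.univ, (0:ℝ) ≤ p k * Real.exp (-η' * w k) := fun k _ =>
        mul_nonneg (hp k) (Real.exp_pos _).le
      have := Finset.sum_eq_zero_iff_of_nonneg hle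
      have hsz : ∑ k, p k * Real.exp (-η' * w k) = 0 :=
        le_antisymm h (Finset.sum_nonneg hle)
      exact this.mp hsz
    have : ∑ k, p k = 0 := by
      apply Finset.sum_eq_zero
      intro k hk
      have := hz k hk
      rcases mul_eq_zero.mp this with h1 | h2
      · exact h1
      · exact absurd h2 (Real.exp_ne_zero _)
    rw [hpsum] at this; norm_num at this
  have hle1 : ∑ k, p k * Real.exp (-η' * w k) ≤ 1 := by
    rw [← hpsum]
    apply Finset.sum_le_sum
    intro k _
    have : Real.exp (-η' * w k) ≤ 1 := by
      rw [Real.exp_le_one_iff]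
      have := mul_nonneg hη'.le (hw k)
      linarith
    nlinarith [hp k]
  have hlog : Real.log (∑ k, p k * Real.exp (-η' * w k)) ≤ 0 :=
    Real.log_nonpos hpos.le hle1
  have h2 : (1 / η) * Real.log (∑ k, p k * Real.exp (-η' * w k)) ≤ 0 :=
    mul_nonpos_of_nonneg_of_nonpos (by positivity) hlog
  have h3 : ∑ k, p k * w k ≤ (η / 2) * ∑ k, p k * (w k) ^ 2 + 1 / (2 * η) := by
    have key : ∀ k, p k * w k ≤ (η / 2) * (p k * (w k) ^ 2) + p k * (1 / (2 * η)) := by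
      intro k
      have hpt : w k ≤ η / 2 * w k ^ 2 + 1 / (2 * η) := by
        rw [← sub_nonneg]
        have heq : η / 2 * w k ^ 2 + 1 / (2 * η) - w k = (η * w k - 1) ^ 2 / (2 * η) := by
          field_simp; ring
        rw [heq]; positivity
      have := mul_le_mul_of_nonneg_left hpt (hp k)
      nlinarith [this]
    calc ∑ k, p k * w k ≤ ∑ k, ((η / 2) * (p k * (w k) ^ 2) + p k * (1 / (2 * η))) :=
          Finset.sum_le_sum fun k _ => key k
      _ = (η / 2) * ∑ k, p k * (w k) ^ 2 + 1 / (2 * η) := by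
          rw [Finset.sum_add_distrib, ← Finset.mul_sum, ← Finset.sum_mul, hpsum, one_mul]
  linarith
end

section
/- Suppose nonnegative reals (x_t) satisfy x_{t+1} ≤ β(t+1-t_b)·x_{t_b} + γw for times t in batch b (running over consecutive batches with start times t_b, batch lengths τ_b non-decreasing), where β : ℕ → ℝ is non-increasing, nonnegative, β(0)=1, and r := (τ_1/τ_0)·β(τ_0) < 1, with τ_{b+1}/τ_b·β(τ_b) non-increasing in b. Then the weighted sums satisfy: for all b ≥ 1, H(τ_b)·x_{t_b} ≤ r^b · H(τ_0)·x_{t_0} + H(τ_b)·γw/(1-β(τ_1)), where H(n) = ∑_{i=0}^{n-1} β(i). Consequently ∑_{b=0}^{B-1} H(τ_b)·x_{t_b} ≤ H(τ_0)x_{t_0}/(1-r) + (γw/(1-β(τ_1)))·∑_{b=1}^{B-1} H(τ_b). -/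
open Finset

/-!
The averages `H n / n` of the antitone sequence `β` decrease, so
`H (τ (b+1)) β (τ b) ≤ (τ (b+1) / τ b) β (τ b) H (τ b) ≤ r H (τ b)`. With `C = γ w / (1 - β (τ 1))`,
this makes `r ^ b H (τ 0) x (t 0) / H (τ b) + C` a super-solution of the contraction recurrence
from `b = 1` on, so it dominates `x (t b)`; multiplying by `H (τ b)` gives the first bound, and
summing it against the geometric series gives the second.
-/

theorem Antitone.natCast_mul_le_sum_range {β : ℕ → ℝ} (hβ : Antitone β) {n m : ℕ}
    (h : n ≤ m) : (n : ℝ) * β m ≤ ∑ i ∈ range n, β i := by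
  simpa using card_nsmul_le_sum (range n) β (β m) fun i hi => hβ ((mem_range.1 hi).le.trans h)

theorem Antitone.natCast_mul_sum_range_le {β : ℕ → ℝ} (hβ : Antitone β) {n m : ℕ}
    (h : n ≤ m) : (n : ℝ) * ∑ i ∈ range m, β i ≤ m * ∑ i ∈ range n, β i := by
  induction m, h using Nat.le_induction with
  | base => rfl
  | succ m hnm ih =>
    have := hβ.natCast_mul_le_sum_range hnm
    rw [sum_range_succ]
    push_cast
    linarith

theorem Antitone.sum_range_mul_le {β : ℕ → ℝ} (hβ : Antitone β) {n m : ℕ} (hn : 0 < n)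
    (hnm : n ≤ m) (hβn : 0 ≤ β n) {r : ℝ} (hr : m / n * β n ≤ r) :
    (∑ i ∈ range m, β i) * β n ≤ r * ∑ i ∈ range n, β i := by
  have hn' : (0 : ℝ) < n := by exact_mod_cast hn
  have hsum : 0 ≤ ∑ i ∈ range n, β i :=
    sum_nonneg fun i hi => hβn.trans (hβ (mem_range.1 hi).le)
  calc (∑ i ∈ range m, β i) * β n ≤ (m / n * β n) * ∑ i ∈ range n, β i := by
        rw [div_mul_eq_mul_div, div_mul_eq_mul_div, le_div_iff₀ hn']
        nlinarith [hβ.natCast_mul_sum_range_le hnm]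
    _ ≤ r * ∑ i ∈ range n, β i := by gcongr

theorem le_of_le_mul_add_of_mul_add_le {a g x z : ℕ → ℝ} (ha : ∀ n, 0 ≤ a n)
    (hx : ∀ n, x (n + 1) ≤ a n * x n + g n) (hz : ∀ n, a n * z n + g n ≤ z (n + 1))
    (h0 : x 0 ≤ z 0) (n : ℕ) : x n ≤ z n := by
  induction n with
  | zero => exact h0
  | succ n ih =>
    calc x (n + 1) ≤ a n * x n + g n := hx n
      _ ≤ a n * z n + g n := by gcongr; exact ha n
      _ ≤ z (n + 1) := hz n

theorem mul_div_one_sub_add_le {a a₁ g : ℝ} (ha : a ≤ a₁) (ha₁ : a₁ < 1) (hg : 0 ≤ g) :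
    a * (g / (1 - a₁)) + g ≤ g / (1 - a₁) := by
  have h : 0 < 1 - a₁ := sub_pos.2 ha₁
  calc a * (g / (1 - a₁)) + g ≤ a₁ * (g / (1 - a₁)) + g := by gcongr
    _ = g / (1 - a₁) := by field_simp; ring

theorem mul_le_pow_mul_add_of_le_mul_add {h a x : ℕ → ℝ} {r g C : ℝ} (hh : ∀ n, 0 < h n)
    (ha : ∀ n, 0 ≤ a n) (hr : 0 ≤ r) (hstep : ∀ n, h (n + 1) * a n ≤ r * h n)
    (hg : g ≤ C) (hC : ∀ n, a (n + 1) * C + g ≤ C) (hx : ∀ n, x (n + 1) ≤ a n * x n + g)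
    (hx0 : 0 ≤ x 0) (n : ℕ) (hn : 1 ≤ n) : h n * x n ≤ r ^ n * (h 0 * x 0) + h n * C := by
  set y := h 0 * x 0
  have hy : 0 ≤ y := mul_nonneg (hh 0).le hx0
  -- `C` is switched off at `n = 0`, where `hC` gives nothing; `hg` covers the step from `0` to `1`.
  set z : ℕ → ℝ := fun n => r ^ n * y / h n + if n = 0 then 0 else C
  have hz (n : ℕ) : a n * z n + g ≤ z (n + 1) := by
    have hdecay : a n * (r ^ n * y / h n) ≤ r ^ (n + 1) * y / h (n + 1) := by
      rw [mul_div_assoc', div_le_div_iff₀ (hh n) (hh _), pow_succ]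
      nlinarith [mul_le_mul_of_nonneg_right (hstep n) (mul_nonneg (pow_nonneg hr n) hy)]
    have hCn : a n * (if n = 0 then 0 else C) + g ≤ C := by
      rcases n with _ | n
      · simpa using hg
      · simpa using hC n
    simp only [z, mul_add, if_neg n.succ_ne_zero]
    linarith
  have hxz : x n ≤ z n :=
    le_of_le_mul_add_of_mul_add_le (g := fun _ => g) ha hx hz (by simp [z, y, (hh 0).ne']) n
  calc h n * x n ≤ h n * z n := by gcongr; exact (hh n).le
    _ = r ^ n * y + h n * C := by
      simp only [z, if_neg (by omega : n ≠ 0)]; field_simp [(hh n).ne']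

theorem sum_range_le_div_add_of_le_geom {y h : ℕ → ℝ} {r C : ℝ} (hr0 : 0 ≤ r) (hr1 : r < 1)
    (hy0 : 0 ≤ y 0) (hy : ∀ b, 1 ≤ b → y b ≤ r ^ b * y 0 + h b * C) (B : ℕ) :
    ∑ b ∈ range B, y b ≤ y 0 / (1 - r) + C * ∑ b ∈ Icc 1 (B - 1), h b := by
  have hgeom : ∑ b ∈ range B, r ^ b * y 0 ≤ y 0 / (1 - r) := by
    have := geom_sum_Ico_le_of_lt_one (m := 0) (n := B) hr0 hr1
    rw [← range_eq_Ico, pow_zero] at this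
    rw [← sum_mul, div_eq_mul_one_div, mul_comm (y 0)]
    exact mul_le_mul_of_nonneg_right this hy0
  have hIcc : (range B).filter (1 ≤ ·) = Icc 1 (B - 1) := by
    ext b; simp only [mem_filter, mem_range, mem_Icc]; omega
  calc ∑ b ∈ range B, y b ≤ ∑ b ∈ range B, (r ^ b * y 0 + if 1 ≤ b then h b * C else 0) := by
        refine sum_le_sum fun b _ => ?_
        split_ifs with hb
        · exact hy b hb
        · obtain rfl : b = 0 := by omega
          simp
    _ ≤ y 0 / (1 - r) + C * ∑ b ∈ Icc 1 (B - 1), h b := by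
        rw [sum_add_distrib, ← sum_filter, hIcc, mul_sum]
        simp only [mul_comm C]
        linarith

theorem weighted_sum_between_breaks_general
    (β : ℕ → ℝ) (hβmono : Antitone β) (hβnonneg : ∀ i, 0 ≤ β i) (hβ0 : β 0 = 1)
    (γ w : ℝ) (hγ : 0 ≤ γ) (hw : 0 ≤ w)
    (τ : ℕ → ℕ) (hτpos : ∀ b, 0 < τ b) (hτmono : Monotone τ)
    (hratio : ∀ b, ((τ (b + 2) : ℝ) / (τ (b + 1))) * β (τ (b + 1)) ≤
      ((τ (b + 1) : ℝ) / (τ b)) * β (τ b))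
    (hr : ((τ 1 : ℝ) / (τ 0)) * β (τ 0) < 1)
    (t : ℕ → ℕ)
    (x : ℕ → ℝ) (hx : ∀ s, 0 ≤ x s)
    (hcontr : ∀ b, x (t (b + 1)) ≤ β (τ b) * x (t b) + γ * w)
    (H : ℕ → ℝ) (hH : ∀ n, H n = ∑ i ∈ Finset.range n, β i) :
    (∀ b, 1 ≤ b →
      H (τ b) * x (t b) ≤
        (((τ 1 : ℝ) / (τ 0)) * β (τ 0)) ^ b * (H (τ 0) * x (t 0)) +
          H (τ b) * (γ * w / (1 - β (τ 1)))) ∧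
    (∀ B : ℕ,
      ∑ b ∈ Finset.range B, H (τ b) * x (t b) ≤
        H (τ 0) * x (t 0) / (1 - ((τ 1 : ℝ) / (τ 0)) * β (τ 0)) +
          (γ * w / (1 - β (τ 1))) * ∑ b ∈ Finset.Icc 1 (B - 1), H (τ b)) := by
  set r := ((τ 1 : ℝ) / (τ 0)) * β (τ 0)
  set C := γ * w / (1 - β (τ 1))
  set y₀ := H (τ 0) * x (t 0)
  have hH_pos (b : ℕ) : 0 < H (τ b) := by
    rw [hH]
    exact sum_pos' (fun i _ => hβnonneg i) ⟨0, mem_range.2 (hτpos b), hβ0 ▸ one_pos⟩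
  have hy₀ : 0 ≤ y₀ := mul_nonneg (hH_pos 0).le (hx _)
  have hγw : 0 ≤ γ * w := mul_nonneg hγ hw
  have hr_ge : β (τ 0) ≤ r := le_mul_of_one_le_left (hβnonneg _) <|
    (one_le_div₀ (by exact_mod_cast hτpos 0)).2 (by exact_mod_cast hτmono (Nat.zero_le 1))
  have hr0 : 0 ≤ r := (hβnonneg _).trans hr_ge
  have hβ₁ : β (τ 1) < 1 := (hβmono (hτmono (Nat.zero_le 1))).trans_lt (hr_ge.trans_lt hr)
  have hstep (b : ℕ) : H (τ (b + 1)) * β (τ b) ≤ r * H (τ b) := by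
    rw [hH, hH]
    exact hβmono.sum_range_mul_le (hτpos b) (hτmono b.le_succ) (hβnonneg _)
      (antitone_nat_of_succ_le (f := fun b => (τ (b + 1) : ℝ) / τ b * β (τ b)) hratio b.zero_le)
  have hweighted : ∀ b, 1 ≤ b → H (τ b) * x (t b) ≤ r ^ b * y₀ + H (τ b) * C :=
    mul_le_pow_mul_add_of_le_mul_add hH_pos (fun b => hβnonneg _) hr0 hstep
      (le_div_self hγw (sub_pos.2 hβ₁) (by linarith [hβnonneg (τ 1)]))
      (fun b => mul_div_one_sub_add_le (hβmono (hτmono (by omega))) hβ₁ hγw) hcontr (hx _)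
  exact ⟨hweighted, sum_range_le_div_add_of_le_geom (y := fun b => H (τ b) * x (t b)) hr0 hr hy₀
    hweighted⟩

theorem weighted_sum_between_breaks
    (β : ℕ → ℝ) (hβmono : Antitone β) (hβnonneg : ∀ i, 0 ≤ β i) (hβ0 : β 0 = 1)
    (γ w : ℝ) (hγ : 0 ≤ γ) (hw : 0 ≤ w)
    (τ : ℕ → ℕ) (hτpos : ∀ b, 0 < τ b) (hτmono : Monotone τ)
    (hratio : ∀ b, ((τ (b + 2) : ℝ) / (τ (b + 1))) * β (τ (b + 1)) ≤
      ((τ (b + 1) : ℝ) / (τ b)) * β (τ b))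
    (hr : ((τ 1 : ℝ) / (τ 0)) * β (τ 0) < 1)
    (t : ℕ → ℕ) (ht : ∀ b, t (b + 1) = t b + τ b)
    (x : ℕ → ℝ) (hx : ∀ s, 0 ≤ x s)
    (hcontr : ∀ b, x (t (b + 1)) ≤ β (τ b) * x (t b) + γ * w)
    (H : ℕ → ℝ) (hH : ∀ n, H n = ∑ i ∈ Finset.range n, β i) :
    (∀ b, 1 ≤ b →
      H (τ b) * x (t b) ≤
        (((τ 1 : ℝ) / (τ 0)) * β (τ 0)) ^ b * (H (τ 0) * x (t 0)) +
          H (τ b) * (γ * w / (1 - β (τ 1)))) ∧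
    (∀ B : ℕ,
      ∑ b ∈ Finset.range B, H (τ b) * x (t b) ≤
        H (τ 0) * x (t 0) / (1 - ((τ 1 : ℝ) / (τ 0)) * β (τ 0)) +
          (γ * w / (1 - β (τ 1))) * ∑ b ∈ Finset.Icc 1 (B - 1), H (τ b)) :=
  weighted_sum_between_breaks_general β hβmono hβnonneg hβ0 γ w hγ hw τ hτpos hτmono hratio hr t x
    hx hcontr H hH
end
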